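/- Let b > 0 and let (f_j)_{j≥1} be a sequence of functions f_j : ℝ → ℝ that are twice continuously differentiable on [0,b], with constants C₁, C₂ ≥ 0 such that |f_j'(α)| ≤ C₁ and |f_j''(α)| ≤ C₂ for all j ≥ 1 and all α ∈ [0,b]. Assume that for every α ∈ [0,b] the limit λ(α) = lim_{m→∞} (1/m) Σ_{j=1}^m f_j(α) exists. Then λ is differentiable at every α ∈ (0,b) and |λ'(α)| ≤ C₁ for all α ∈ (0,b). -/

import Mathlib

/-!
Each Cesàro mean `g m` of the `f j` inherits the bounds `C1`, `C2` on its first two derivatives,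
so `|g m β - g m α - (g m)' α * (β - α)| ≤ C2 * (β - α) ^ 2` uniformly in `m`. Along a subsequence
the slopes `(g m)' α ∈ [-C1, C1]` converge to some `L`, and passing to the limit gives the same
quadratic estimate for `lam` with slope `L`; hence `lam' α = L`.
-/

open Filter Topology

/-- Equal to `0` for `m = 0`, since `1 / 0 = 0`. -/
noncomputable def cesaroMean (u : ℕ → ℝ) (m : ℕ) : ℝ :=
  (1 / (m : ℝ)) * ∑ j ∈ Finset.Icc 1 m, u j

lemma abs_cesaroMean_le {u : ℕ → ℝ} {C : ℝ} (m : ℕ) (hC : 0 ≤ C)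
    (hu : ∀ j, 1 ≤ j → |u j| ≤ C) : |cesaroMean u m| ≤ C := by
  rcases Nat.eq_zero_or_pos m with rfl | hm
  · simpa [cesaroMean] using hC
  have hsum : |∑ j ∈ Finset.Icc 1 m, u j| ≤ m * C := by
    calc |∑ j ∈ Finset.Icc 1 m, u j| ≤ ∑ j ∈ Finset.Icc 1 m, |u j| :=
          Finset.abs_sum_le_sum_abs _ _
      _ ≤ ∑ _j ∈ Finset.Icc 1 m, C :=
          Finset.sum_le_sum fun j hj => hu j (Finset.mem_Icc.mp hj).1
      _ = m * C := by simp
  have hm' : (0 : ℝ) < m := by exact_mod_cast hm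
  rw [cesaroMean, abs_mul, abs_of_pos (by positivity), one_div_mul_eq_div, div_le_iff₀ hm']
  linarith

lemma hasDerivWithinAt_cesaroMean {f f' : ℕ → ℝ → ℝ} {s : Set ℝ} {x : ℝ} (m : ℕ)
    (hf : ∀ j, 1 ≤ j → HasDerivWithinAt (f j) (f' j x) s x) :
    HasDerivWithinAt (fun t => cesaroMean (fun j => f j t) m)
      (cesaroMean (fun j => f' j x) m) s x :=
  (HasDerivWithinAt.fun_sum fun j hj => hf j (Finset.mem_Icc.mp hj).1).const_mul _

lemma abs_sub_sub_mul_le_of_abs_deriv2_le {f f' f'' : ℝ → ℝ} {s : Set ℝ} {C a b : ℝ}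
    (hs : Convex ℝ s) (hf : ∀ x ∈ s, HasDerivWithinAt f (f' x) s x)
    (hf' : ∀ x ∈ s, HasDerivWithinAt f' (f'' x) s x) (hC : ∀ x ∈ s, |f'' x| ≤ C)
    (ha : a ∈ s) (hb : b ∈ s) :
    |f b - f a - f' a * (b - a)| ≤ C * (b - a) ^ 2 := by
  have hab : Set.uIcc a b ⊆ s := hs.ordConnected.uIcc_subset ha hb
  have hderiv : ∀ x ∈ Set.uIcc a b, HasDerivWithinAt (fun t => f t - f' a * t)
      (f' x - f' a) (Set.uIcc a b) x := fun x hx =>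
    ((hf x (hab hx)).mono hab).sub (by simpa using (hasDerivWithinAt_id x _).const_mul (f' a))
  have hbound : ∀ x ∈ Set.uIcc a b, ‖f' x - f' a‖ ≤ C * |b - a| := fun x hx =>
    calc ‖f' x - f' a‖ ≤ C * ‖x - a‖ :=
          hs.norm_image_sub_le_of_norm_hasDerivWithin_le hf' hC ha (hab hx)
      _ ≤ C * |b - a| := by
          have hC0 : 0 ≤ C := (abs_nonneg _).trans (hC a ha)
          exact mul_le_mul_of_nonneg_left (Set.abs_sub_left_of_mem_uIcc hx) hC0
  have := (convex_uIcc a b).norm_image_sub_le_of_norm_hasDerivWithin_le hderiv hbound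
    Set.left_mem_uIcc Set.right_mem_uIcc
  rw [Real.norm_eq_abs, Real.norm_eq_abs] at this
  calc |f b - f a - f' a * (b - a)| = |f b - f' a * b - (f a - f' a * a)| := by ring_nf
    _ ≤ C * |b - a| * |b - a| := this
    _ = C * (b - a) ^ 2 := by rw [mul_assoc, abs_mul_abs_self, sq]

lemma hasDerivAt_of_abs_sub_sub_mul_le_sq {f : ℝ → ℝ} {a L C : ℝ}
    (h : ∀ᶠ x in 𝓝 a, |f x - f a - L * (x - a)| ≤ C * (x - a) ^ 2) : HasDerivAt f L a := by
  rw [hasDerivAt_iff_isLittleO]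
  refine Asymptotics.IsBigO.trans_isLittleO ?_ (Asymptotics.isLittleO_pow_sub_sub a one_lt_two)
  refine Asymptotics.IsBigO.of_bound C (h.mono fun x hx => ?_)
  simpa [Real.norm_eq_abs, mul_comm L] using hx

/-- The derivative is the limit of a convergent subsequence of the slopes `v n`. -/
lemma exists_hasDerivAt_of_tendsto_of_abs_sub_sub_mul_le_sq {u : ℕ → ℝ → ℝ} {v : ℕ → ℝ}
    {g : ℝ → ℝ} {s : Set ℝ} {a B C : ℝ} (hs : s ∈ 𝓝 a)
    (hu : ∀ x ∈ s, Tendsto (fun n => u n x) atTop (𝓝 (g x))) (hv : ∀ n, |v n| ≤ B)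
    (hexp : ∀ n, ∀ x ∈ s, |u n x - u n a - v n * (x - a)| ≤ C * (x - a) ^ 2) :
    ∃ L, HasDerivAt g L a ∧ |L| ≤ B := by
  obtain ⟨L, hLB, φ, hφ, hvL⟩ := tendsto_subseq_of_bounded (Metric.isBounded_closedBall)
    (x := v) (s := Metric.closedBall 0 B) fun n => by simpa using hv n
  refine ⟨L, hasDerivAt_of_abs_sub_sub_mul_le_sq (C := C) ?_, ?_⟩
  · filter_upwards [hs] with x hx
    have hlim := ((((hu x hx).sub (hu a (mem_of_mem_nhds hs))).comp hφ.tendsto_atTop).sub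
      (hvL.mul_const (x - a))).abs
    exact le_of_tendsto hlim (Eventually.of_forall fun n => hexp (φ n) x hx)
  · simpa [Metric.closure_closedBall] using hLB

theorem stmt_18_general (b : ℝ) (f f' f'' : ℕ → ℝ → ℝ) (C1 C2 : ℝ)
    (hC1 : 0 ≤ C1) (hC2 : 0 ≤ C2)
    (hderiv1 : ∀ j : ℕ, 1 ≤ j → ∀ α ∈ Set.Icc (0:ℝ) b,
      HasDerivWithinAt (f j) (f' j α) (Set.Icc 0 b) α)
    (hderiv2 : ∀ j : ℕ, 1 ≤ j → ∀ α ∈ Set.Icc (0:ℝ) b,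
      HasDerivWithinAt (f' j) (f'' j α) (Set.Icc 0 b) α)
    (hbd1 : ∀ j : ℕ, 1 ≤ j → ∀ α ∈ Set.Icc (0:ℝ) b, |f' j α| ≤ C1)
    (hbd2 : ∀ j : ℕ, 1 ≤ j → ∀ α ∈ Set.Icc (0:ℝ) b, |f'' j α| ≤ C2)
    (lam : ℝ → ℝ)
    (hlam : ∀ α ∈ Set.Icc (0:ℝ) b,
      Tendsto (fun m : ℕ => (1 / (m:ℝ)) * ∑ j ∈ Finset.Icc 1 m, f j α)
        atTop (nhds (lam α))) :
    ∀ α ∈ Set.Ioo (0:ℝ) b, DifferentiableAt ℝ lam α ∧ |deriv lam α| ≤ C1 := by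
  intro α hα
  have hS : Set.Icc 0 b ∈ 𝓝 α := Icc_mem_nhds hα.1 hα.2
  have hexp : ∀ m, ∀ β ∈ Set.Icc 0 b,
      |cesaroMean (fun j => f j β) m - cesaroMean (fun j => f j α) m
        - cesaroMean (fun j => f' j α) m * (β - α)| ≤ C2 * (β - α) ^ 2 :=
    fun m β hβ => abs_sub_sub_mul_le_of_abs_deriv2_le (convex_Icc 0 b)
      (fun x hx => hasDerivWithinAt_cesaroMean m fun j hj => hderiv1 j hj x hx)
      (fun x hx => hasDerivWithinAt_cesaroMean m fun j hj => hderiv2 j hj x hx)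
      (fun x hx => abs_cesaroMean_le m hC2 fun j hj => hbd2 j hj x hx)
      (mem_of_mem_nhds hS) hβ
  obtain ⟨L, hL, hLC1⟩ := exists_hasDerivAt_of_tendsto_of_abs_sub_sub_mul_le_sq hS hlam
    (fun m => abs_cesaroMean_le m hC1 fun j hj => hbd1 j hj α (mem_of_mem_nhds hS)) hexp
  exact ⟨hL.differentiableAt, hL.deriv ▸ hLC1⟩

theorem stmt_18 (b : ℝ) (hb : 0 < b) (f f' f'' : ℕ → ℝ → ℝ) (C1 C2 : ℝ)
    (hC1 : 0 ≤ C1) (hC2 : 0 ≤ C2)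
    (hderiv1 : ∀ j : ℕ, 1 ≤ j → ∀ α ∈ Set.Icc (0:ℝ) b,
      HasDerivWithinAt (f j) (f' j α) (Set.Icc 0 b) α)
    (hderiv2 : ∀ j : ℕ, 1 ≤ j → ∀ α ∈ Set.Icc (0:ℝ) b,
      HasDerivWithinAt (f' j) (f'' j α) (Set.Icc 0 b) α)
    (hcont : ∀ j : ℕ, 1 ≤ j → ContinuousOn (f'' j) (Set.Icc 0 b))
    (hbd1 : ∀ j : ℕ, 1 ≤ j → ∀ α ∈ Set.Icc (0:ℝ) b, |f' j α| ≤ C1)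
    (hbd2 : ∀ j : ℕ, 1 ≤ j → ∀ α ∈ Set.Icc (0:ℝ) b, |f'' j α| ≤ C2)
    (lam : ℝ → ℝ)
    (hlam : ∀ α ∈ Set.Icc (0:ℝ) b,
      Tendsto (fun m : ℕ => (1 / (m:ℝ)) * ∑ j ∈ Finset.Icc 1 m, f j α)
        atTop (nhds (lam α))) :
    ∀ α ∈ Set.Ioo (0:ℝ) b, DifferentiableAt ℝ lam α ∧ |deriv lam α| ≤ C1 :=
  stmt_18_general b f f' f'' C1 C2 hC1 hC2 hderiv1 hderiv2 hbd1 hbd2 lam hlam
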